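/- Let f : ℝ^{m×n} → ℝ be continuously differentiable with Frobenius gradient G (i.e., the Fréchet derivative of f at Y applied to X equals ⟨G(Y), X⟩_F). Let Û ∈ ℝ^{m×k}, V̂ ∈ ℝ^{n×k} have orthonormal columns and let Ŝ : ℝ → ℝ^{k×k} be differentiable on [t0, t1] with Ŝ'(t) = −Ûᵀ G(Û Ŝ(t) V̂ᵀ) V̂. Set Ŷ(t) = Û Ŝ(t) V̂ᵀ, Y0 = Ŷ(t0), Ŷ1 = Ŷ(t1), h = t1 − t0, and let Y1 ∈ ℝ^{m×n} satisfy ‖Y1 − Ŷ1‖_F ≤ ϑ. Then f(Y1) ≤ f(Y0) − α² h + β ϑ, where α = min_{t ∈ [t0,t1]} ‖Ûᵀ G(Ŷ(t)) V̂‖_F and β = max_{τ ∈ [0,1]} ‖G(τ Y1 + (1−τ) Ŷ1)‖_F. -/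

import Mathlib

/-!
Along the Galerkin trajectory `Ŷ(t) = Û Ŝ(t) V̂ᵀ`, the chain rule and the cyclicity of the trace
give `d/dt f(Ŷ(t)) = ⟨G(Ŷ), Û Ŝ' V̂ᵀ⟩_F = ⟨Ûᵀ G(Ŷ) V̂, Ŝ'⟩_F = -‖Ûᵀ G(Ŷ) V̂‖_F² ≤ -α²`, so the
mean value theorem gives `f(Ŷ₁) ≤ f(Y₀) - α² h`. Along the segment from `Ŷ₁` to `Y₁` the
derivative of `f` is `⟨G, Y₁ - Ŷ₁⟩_F ≤ β ϑ` by Cauchy–Schwarz, which bounds `f(Y₁) - f(Ŷ₁)`.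
-/

open Matrix

attribute [local instance] Matrix.frobeniusSeminormedAddCommGroup
  Matrix.frobeniusNormedAddCommGroup Matrix.frobeniusNormedSpace

/-- The Frobenius inner product `⟨A, B⟩_F = trace(Aᵀ B)`. -/
noncomputable def frobInner {m n : ℕ} (A B : Matrix (Fin m) (Fin n) ℝ) : ℝ :=
  (Aᵀ * B).trace

/-- The Frobenius norm `‖A‖_F = ⟨A, A⟩_F^{1/2}`. -/
noncomputable def frobNorm {m n : ℕ} (A : Matrix (Fin m) (Fin n) ℝ) : ℝ :=
  Real.sqrt (frobInner A A)

open Set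

section Frobenius

variable {m n : ℕ}

lemma frobInner_neg_right (A B : Matrix (Fin m) (Fin n) ℝ) :
    frobInner A (-B) = -frobInner A B := by
  simp [frobInner]

lemma frobInner_mul_mul_transpose {k l : ℕ} (A : Matrix (Fin m) (Fin n) ℝ)
    (U : Matrix (Fin m) (Fin k) ℝ) (S : Matrix (Fin k) (Fin l) ℝ) (V : Matrix (Fin n) (Fin l) ℝ) :
    frobInner A (U * S * Vᵀ) = frobInner (Uᵀ * A * V) S := by
  rw [frobInner, frobInner, ← Matrix.mul_assoc, ← Matrix.mul_assoc, trace_mul_cycle,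
    transpose_mul, transpose_mul, transpose_transpose, Matrix.mul_assoc]

lemma frobInner_self_nonneg (A : Matrix (Fin m) (Fin n) ℝ) : 0 ≤ frobInner A A := by
  simp only [frobInner, trace, diag, mul_apply, transpose_apply]
  exact Finset.sum_nonneg fun _ _ => Finset.sum_nonneg fun _ _ => mul_self_nonneg _

lemma frobNorm_nonneg (A : Matrix (Fin m) (Fin n) ℝ) : 0 ≤ frobNorm A :=
  Real.sqrt_nonneg _

lemma frobNorm_sq (A : Matrix (Fin m) (Fin n) ℝ) : frobNorm A ^ 2 = frobInner A A :=
  Real.sq_sqrt (frobInner_self_nonneg A)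

lemma frobInner_le_frobNorm_mul_frobNorm (A B : Matrix (Fin m) (Fin n) ℝ) :
    frobInner A B ≤ frobNorm A * frobNorm B := by
  simp only [frobNorm, frobInner, trace, diag, mul_apply, transpose_apply,
    ← Finset.sum_product']
  simpa [sq] using
    Real.sum_mul_le_sqrt_mul_sqrt Finset.univ (fun p : Fin n × Fin m => A p.2 p.1)
      (fun p => B p.2 p.1)

lemma continuous_frobNorm : Continuous (frobNorm : Matrix (Fin m) (Fin n) ℝ → ℝ) := by
  unfold frobNorm frobInner
  fun_prop

end Frobenius

theorem Matrix.hasDerivAt_iff {m n : Type*} [Fintype m] [Fintype n]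
    {S : ℝ → Matrix m n ℝ} {S' : Matrix m n ℝ} {t : ℝ} :
    HasDerivAt S S' t ↔ ∀ i j, HasDerivAt (fun s => S s i j) (S' i j) t := by
  refine hasDerivAt_iff_tendsto_slope.trans ?_
  simp only [hasDerivAt_iff_tendsto_slope]
  exact tendsto_pi_nhds.trans (forall_congr' fun _ => tendsto_pi_nhds)

theorem HasDerivAt.mul_mul_transpose {l m n k : Type*} [Fintype l] [Fintype m] [Fintype n]
    [Fintype k] (U : Matrix m k ℝ) (V : Matrix n l ℝ) {S : ℝ → Matrix k l ℝ}
    {S' : Matrix k l ℝ} {t : ℝ} (hS : HasDerivAt S S' t) :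
    HasDerivAt (fun s => U * S s * Vᵀ) (U * S' * Vᵀ) t :=
  (LinearMap.toContinuousLinearMap
    (mulRightLinearMap m ℝ Vᵀ ∘ₗ mulLeftLinearMap l ℝ U)).hasFDerivAt.comp_hasDerivAt t hS

theorem HasDerivAt.comp_of_fderiv_eq_frobInner {m n : ℕ} {f : Matrix (Fin m) (Fin n) ℝ → ℝ}
    {γ : ℝ → Matrix (Fin m) (Fin n) ℝ} {γ' g : Matrix (Fin m) (Fin n) ℝ} {t : ℝ}
    (hf : DifferentiableAt ℝ f (γ t)) (hgrad : fderiv ℝ f (γ t) γ' = frobInner g γ')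
    (hγ : HasDerivAt γ γ' t) :
    HasDerivAt (fun s => f (γ s)) (frobInner g γ') t :=
  (hf.hasFDerivAt.comp_hasDerivAt t hγ).congr_deriv hgrad

lemma image_sub_le_mul_sub_of_hasDerivAt_le {g g' : ℝ → ℝ} {a b C : ℝ} (hab : a ≤ b)
    (hg : ∀ t ∈ Icc a b, HasDerivAt g (g' t) t) (hC : ∀ t ∈ Icc a b, g' t ≤ C) :
    g b - g a ≤ C * (b - a) :=
  (convex_Icc a b).image_sub_le_mul_sub_of_deriv_le
    (fun t ht => (hg t ht).continuousAt.continuousWithinAt)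
    (fun t ht => (hg t (interior_subset ht)).differentiableAt.differentiableWithinAt)
    (fun t ht => (hg t (interior_subset ht)).deriv ▸ hC t (interior_subset ht))
    a (left_mem_Icc.2 hab) b (right_mem_Icc.2 hab) hab

lemma ContinuousOn.le_ciSup_Icc {g : ℝ → ℝ} {a b τ : ℝ} (hg : ContinuousOn g (Icc a b))
    (hτ : τ ∈ Icc a b) : g τ ≤ ⨆ s : Icc a b, g s :=
  le_ciSup (isCompact_range hg.domRestrict).bddAbove ⟨τ, hτ⟩

section GradientFlow

variable {m n : ℕ} {f : Matrix (Fin m) (Fin n) ℝ → ℝ}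
  {G : Matrix (Fin m) (Fin n) ℝ → Matrix (Fin m) (Fin n) ℝ}

theorem galerkin_flow_decrease {k l : ℕ} (hf : Differentiable ℝ f)
    (hgrad : ∀ Y X, fderiv ℝ f Y X = frobInner (G Y) X)
    (U : Matrix (Fin m) (Fin k) ℝ) (V : Matrix (Fin n) (Fin l) ℝ)
    {S : ℝ → Matrix (Fin k) (Fin l) ℝ} {t0 t1 α : ℝ} (ht : t0 ≤ t1)
    (hS : ∀ t ∈ Icc t0 t1, HasDerivAt S (-(Uᵀ * G (U * S t * Vᵀ) * V)) t)
    (hα0 : 0 ≤ α) (hα : ∀ t ∈ Icc t0 t1, α ≤ frobNorm (Uᵀ * G (U * S t * Vᵀ) * V)) :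
    f (U * S t1 * Vᵀ) ≤ f (U * S t0 * Vᵀ) - α ^ 2 * (t1 - t0) := by
  have hderiv : ∀ t ∈ Icc t0 t1, HasDerivAt (fun s => f (U * S s * Vᵀ))
      (-frobNorm (Uᵀ * G (U * S t * Vᵀ) * V) ^ 2) t := by
    intro t ht
    have := ((hS t ht).mul_mul_transpose U V).comp_of_fderiv_eq_frobInner (hf _) (hgrad _ _)
    rwa [frobInner_mul_mul_transpose, frobInner_neg_right, ← frobNorm_sq] at this
  have := image_sub_le_mul_sub_of_hasDerivAt_le ht hderiv fun t ht =>
    neg_le_neg (pow_le_pow_left₀ hα0 (hα t ht) 2)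
  linarith

theorem le_add_mul_of_frobNorm_gradient_le_on_segment (hf : Differentiable ℝ f)
    (hgrad : ∀ Y X, fderiv ℝ f Y X = frobInner (G Y) X) {X Y : Matrix (Fin m) (Fin n) ℝ}
    {β ϑ : ℝ} (hβ : ∀ τ ∈ Icc (0 : ℝ) 1, frobNorm (G (τ • Y + (1 - τ) • X)) ≤ β)
    (hXY : frobNorm (Y - X) ≤ ϑ) :
    f Y ≤ f X + β * ϑ := by
  have hp : ∀ τ : ℝ, HasDerivAt (fun τ : ℝ => τ • Y + (1 - τ) • X) (Y - X) τ := fun τ => by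
    refine (((hasDerivAt_id τ).smul_const Y).fun_add
      (((hasDerivAt_id τ).const_sub 1).smul_const X)).congr_deriv ?_
    simp only [one_smul, neg_smul, sub_eq_add_neg]
  have hβ0 : 0 ≤ β := (frobNorm_nonneg _).trans (hβ 0 (left_mem_Icc.2 zero_le_one))
  have := image_sub_le_mul_sub_of_hasDerivAt_le zero_le_one
    (fun τ _ => (hp τ).comp_of_fderiv_eq_frobInner (hf _) (hgrad _ _)) fun τ hτ =>
      (frobInner_le_frobNorm_mul_frobNorm _ _).trans
        (mul_le_mul (hβ τ hτ) hXY (frobNorm_nonneg _) hβ0)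
  simp only [one_smul, sub_self, zero_smul, add_zero, sub_zero, zero_add, mul_one] at this
  linarith

end GradientFlow

theorem rank_adaptive_gradient_decrease_general
    {m n k : ℕ} {t0 t1 ϑ : ℝ}
    (f : Matrix (Fin m) (Fin n) ℝ → ℝ)
    (G : Matrix (Fin m) (Fin n) ℝ → Matrix (Fin m) (Fin n) ℝ)
    (hf : Differentiable ℝ f)
    (hG : Continuous G)
    (hgrad : ∀ Y X, fderiv ℝ f Y X = frobInner (G Y) X)
    (Uhat : Matrix (Fin m) (Fin k) ℝ) (Vhat : Matrix (Fin n) (Fin k) ℝ)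
    (Shat : ℝ → Matrix (Fin k) (Fin k) ℝ)
    (Yhat : ℝ → Matrix (Fin m) (Fin n) ℝ)
    (hYhat : ∀ t, Yhat t = Uhat * Shat t * Vhatᵀ)
    (ht : t0 ≤ t1)
    (hS : ∀ t ∈ Set.Icc t0 t1, ∀ i j,
      HasDerivAt (fun s => Shat s i j) ((-(Uhatᵀ * G (Yhat t) * Vhat)) i j) t)
    (Y0 Yhat1 Y1 : Matrix (Fin m) (Fin n) ℝ)
    (hY0 : Y0 = Yhat t0) (hYhat1 : Yhat1 = Yhat t1)
    (h : ℝ) (hh : h = t1 - t0)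
    (hY1 : frobNorm (Y1 - Yhat1) ≤ ϑ)
    (α β : ℝ)
    (hα : α = ⨅ t : Set.Icc t0 t1, frobNorm (Uhatᵀ * G (Yhat ↑t) * Vhat))
    (hβ : β = ⨆ τ : Set.Icc (0:ℝ) 1, frobNorm (G ((τ : ℝ) • Y1 + (1 - (τ : ℝ)) • Yhat1))) :
    f Y1 ≤ f Y0 - α ^ 2 * h + β * ϑ := by
  simp only [hYhat] at hS hα hY0 hYhat1
  subst hY0 hh
  have hS' : ∀ t ∈ Icc t0 t1, HasDerivAt Shat (-(Uhatᵀ * G (Uhat * Shat t * Vhatᵀ) * Vhat)) t :=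
    fun t ht => Matrix.hasDerivAt_iff.2 (hS t ht)
  have galerkin := galerkin_flow_decrease hf hgrad Uhat Vhat ht hS'
    (hα ▸ Real.iInf_nonneg fun _ => frobNorm_nonneg _) fun t ht =>
      hα ▸ ciInf_le ⟨0, forall_mem_range.2 fun _ => frobNorm_nonneg _⟩ (⟨t, ht⟩ : Icc t0 t1)
  have hcont : Continuous fun τ : ℝ => frobNorm (G (τ • Y1 + (1 - τ) • Yhat1)) :=
    continuous_frobNorm.comp (hG.comp (by fun_prop))
  have truncation := le_add_mul_of_frobNorm_gradient_le_on_segment hf hgrad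
    (fun τ hτ => hβ ▸ hcont.continuousOn.le_ciSup_Icc hτ) hY1
  rw [hYhat1] at truncation
  linarith

/-- Theorem 5: one step of the rank-adaptive integrator (Galerkin S-step plus rank truncation
with tolerance `ϑ`) applied to the gradient system `Ȧ = -∇f(A)` satisfies
`f(Y₁) ≤ f(Y₀) - α² h + β ϑ`. -/
theorem rank_adaptive_gradient_decrease
    {m n k : ℕ} {t0 t1 ϑ : ℝ}
    (f : Matrix (Fin m) (Fin n) ℝ → ℝ)
    (G : Matrix (Fin m) (Fin n) ℝ → Matrix (Fin m) (Fin n) ℝ)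
    (hf : Differentiable ℝ f)
    (hG : Continuous G)
    (hgrad : ∀ Y X, fderiv ℝ f Y X = frobInner (G Y) X)
    (Uhat : Matrix (Fin m) (Fin k) ℝ) (Vhat : Matrix (Fin n) (Fin k) ℝ)
    (hU : Uhatᵀ * Uhat = 1) (hV : Vhatᵀ * Vhat = 1)
    (Shat : ℝ → Matrix (Fin k) (Fin k) ℝ)
    (Yhat : ℝ → Matrix (Fin m) (Fin n) ℝ)
    (hYhat : ∀ t, Yhat t = Uhat * Shat t * Vhatᵀ)
    (ht : t0 ≤ t1)
    (hS : ∀ t ∈ Set.Icc t0 t1, ∀ i j,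
      HasDerivAt (fun s => Shat s i j) ((-(Uhatᵀ * G (Yhat t) * Vhat)) i j) t)
    (Y0 Yhat1 Y1 : Matrix (Fin m) (Fin n) ℝ)
    (hY0 : Y0 = Yhat t0) (hYhat1 : Yhat1 = Yhat t1)
    (h : ℝ) (hh : h = t1 - t0)
    (hY1 : frobNorm (Y1 - Yhat1) ≤ ϑ)
    (hϑ : 0 ≤ ϑ)
    (α β : ℝ)
    (hα : α = ⨅ t : Set.Icc t0 t1, frobNorm (Uhatᵀ * G (Yhat ↑t) * Vhat))
    (hβ : β = ⨆ τ : Set.Icc (0:ℝ) 1, frobNorm (G ((τ : ℝ) • Y1 + (1 - (τ : ℝ)) • Yhat1))) :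
    f Y1 ≤ f Y0 - α ^ 2 * h + β * ϑ :=
  rank_adaptive_gradient_decrease_general f G hf hG hgrad Uhat Vhat Shat Yhat hYhat ht hS Y0 Yhat1
    Y1 hY0 hYhat1 h hh hY1 α β hα hβ
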